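/- For every n ≥ 1, the number of 2-path pairs of length (n, n) and distance 1 equals the n-th Catalan number: |𝒫^{2,0}_{n,1}| = C_n = (1/(n+1)) · C(2n, n). -/

import Mathlib

/-- A step of a lattice path: `E = (1,0)` or `N = (0,1)`. -/
inductive Step : Type
  | E | N
deriving DecidableEq, Repr

instance : Fintype Step :=
  ⟨{Step.E, Step.N}, fun x => by cases x <;> simp⟩

/-- The terminal point of a lattice path starting at `(0,0)`. -/
def endpoint (γ : List Step) : ℤ × ℤ :=
  ((γ.count Step.E : ℤ), (γ.count Step.N : ℤ))

/-- The set of lattice points visited by a lattice path starting at `(0,0)`. -/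
def vertices (γ : List Step) : Set (ℤ × ℤ) :=
  {p | ∃ i ≤ γ.length, endpoint (γ.take i) = p}

/-- The bottom-path condition: `γ = E N^{b₁} E N^{b₂} ⋯ E N^{b_m}` where every
`bᵢ ≡ k - 2 (mod k - 1)`. -/
def kGoodBottom (k : ℕ) (γ : List Step) : Prop :=
  ∃ bs : List ℕ, (∀ b ∈ bs, b % (k - 1) = (k - 2) % (k - 1)) ∧
    γ = (bs.map fun b => Step.E :: List.replicate b Step.N).flatten

/-- `γ₁` stays weakly above `γ₂`: no visited point of `γ₂` lies strictly above a
visited point of `γ₁` with the same `x`-coordinate. -/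
def weaklyAbove (γ₁ γ₂ : List Step) : Prop :=
  ∀ p ∈ vertices γ₁, ∀ q ∈ vertices γ₂, p.1 = q.1 → q.2 ≤ p.2

/-- The set `𝒫^{k,ε}_{n,δ}` of `k`-path pairs of length `((k-1)n - ε, (k-1)n)`
and distance `δ`. -/
def PathPairs (k n ε δ : ℕ) : Set (List Step × List Step) :=
  {p | p.1.length = (k - 1) * n - ε ∧ p.1.head? = some Step.N ∧
       p.2.length = (k - 1) * n ∧ p.2.head? = some Step.E ∧
       (∀ q ∈ vertices p.1 ∩ vertices p.2, q = ((0 : ℤ), (0 : ℤ))) ∧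
       (endpoint p.2).1 - (endpoint p.1).1 = (δ : ℤ) ∧
       kGoodBottom k p.2}

/-- The set `𝒫̃^{k,ε}_{n,δ,m}` of weak `k`-path pairs of distance `δ` with
exactly `m` returns (intersections away from the origin). -/
def WeakPathPairs (k n ε δ m : ℕ) : Set (List Step × List Step) :=
  {p | p.1.length = (k - 1) * n - ε ∧ p.1.head? = some Step.N ∧
       p.2.length = (k - 1) * n ∧ p.2.head? = some Step.E ∧
       weaklyAbove p.1 p.2 ∧
       (endpoint p.2).1 - (endpoint p.1).1 = (δ : ℤ) ∧
       kGoodBottom k p.2 ∧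
       ((vertices p.1 ∩ vertices p.2) \ {((0 : ℤ), (0 : ℤ))}).ncard = m}

/-- The generating function `C_k(t) = ∑_{n≥0} (1/(kn+1)) C(kn+1, n) tⁿ` of the
`k`-Catalan (Fuss–Catalan) numbers, as a formal power series over `ℚ`. -/
def fussCatalanGF (k : ℕ) : PowerSeries ℚ :=
  PowerSeries.mk fun n => (((k * n + 1 : ℕ) : ℚ))⁻¹ * ((k * n + 1).choose n : ℚ)

/-!
A path pair of length `n` and distance `1` is `(N :: v, E :: u)` with `v`, `u` of length `n - 1`
and with equally many `E` steps. After `i` steps both paths are on the antidiagonal `x + y = i`, so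
they can only meet after equally many steps, with equal `x`-coordinates; as these move by at most
one per step, non-intersection says exactly that `v` never gets strictly to the right of `u`.
Reading `v` and `u` alternately, with the `N` steps of `v` and the `E` steps of `u` as up steps,
gives a word whose height after `2i` letters is `2 (x_u(i) - x_v(i))`, and `U w D` is then a Dyck
word of semilength `n`. This is a bijection, so there are `C_n` path pairs.
-/

open List DyckStep

namespace List

variable {α : Type*}

theorem count_take_le_count_take_add_one [DecidableEq α] (l : List α) (a : α) (i : ℕ) :
    (l.take i).count a ≤ (l.take (i + 1)).count a := by
  rw [take_add_one, count_append]
  omega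

theorem count_take_add_one_le [DecidableEq α] (l : List α) (a : α) (i : ℕ) :
    (l.take (i + 1)).count a ≤ (l.take i).count a + 1 := by
  have : (l[i]?.toList).length ≤ 1 := by cases l[i]? <;> simp
  have := (l[i]?.toList).count_le_length (a := a)
  rw [take_add_one, count_append]
  omega

theorem count_take_le_of_forall_ne_add_one [DecidableEq α] {l₁ l₂ : List α} {a : α}
    (h : ∀ i, (l₁.take i).count a ≠ (l₂.take i).count a + 1) (i : ℕ) :
    (l₁.take i).count a ≤ (l₂.take i).count a := by
  induction i with
  | zero => simp
  | succ i ih =>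
    have := h (i + 1)
    have := count_take_add_one_le l₁ a i
    have := count_take_le_count_take_add_one l₂ a i
    omega

theorem interleave_inj {u v u' v' : List α} (hl : u.length = v.length)
    (hl' : u'.length = v'.length) (h : interleave u v = interleave u' v') : u = u' ∧ v = v' := by
  induction u generalizing v u' v' with
  | nil => cases v <;> cases u' <;> cases v' <;> simp_all
  | cons a u ih =>
    obtain ⟨b, v, rfl⟩ := exists_cons_of_length_eq_add_one hl.symm
    obtain ⟨a', u', rfl⟩ : ∃ a' u'', u' = a' :: u'' := by
      rcases u' with _ | ⟨a', u'⟩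
      · simp [eq_nil_of_length_eq_zero hl'.symm] at h
      · exact ⟨a', u', rfl⟩
    obtain ⟨b', v', rfl⟩ := exists_cons_of_length_eq_add_one hl'.symm
    simp only [cons_interleave, cons.injEq] at h
    obtain ⟨rfl, rfl, h⟩ := h
    simpa using ih (by simpa using hl) (by simpa using hl') h

theorem exists_eq_interleave_of_length_eq_two_mul {l : List α} {m : ℕ} (hl : l.length = 2 * m) :
    ∃ u v, u.length = m ∧ v.length = m ∧ l = interleave u v := by
  induction m generalizing l with
  | zero => exact ⟨[], [], rfl, rfl, by simpa using hl⟩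
  | succ m ih =>
    match l, hl with
    | a :: b :: l, hl =>
      obtain ⟨u, v, hu, hv, rfl⟩ := ih (l := l) (by simp only [length_cons] at hl; omega)
      exact ⟨a :: u, b :: v, by simpa, by simpa, by simp⟩

end List

theorem Step.count_E_add_count_N (l : List Step) : l.count .E + l.count .N = l.length := by
  induction l with
  | nil => rfl
  | cons a l ih => cases a <;> simp <;> omega

theorem endpoint_fst_add_snd (γ : List Step) : (endpoint γ).1 + (endpoint γ).2 = γ.length := by
  simp only [endpoint]
  exact_mod_cast Step.count_E_add_count_N γ

theorem exists_eq_replicate_append_flatten (γ : List Step) :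
    ∃ (m : ℕ) (bs : List ℕ),
      γ = replicate m .N ++ (bs.map fun b => .E :: replicate b .N).flatten := by
  induction γ with
  | nil => exact ⟨0, [], rfl⟩
  | cons a γ ih =>
    obtain ⟨m, bs, rfl⟩ := ih
    cases a
    · exact ⟨0, m :: bs, by simp⟩
    · exact ⟨m + 1, bs, by simp [replicate_succ]⟩

theorem kGoodBottom_two_cons_E (γ : List Step) : kGoodBottom 2 (.E :: γ) := by
  obtain ⟨m, bs, rfl⟩ := exists_eq_replicate_append_flatten γ
  exact ⟨m :: bs, by simp [Nat.mod_one], by simp⟩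

theorem forall_mem_vertices_inter_eq_zero_iff {γ₁ γ₂ : List Step} (hl : γ₁.length = γ₂.length) :
    (∀ q ∈ vertices γ₁ ∩ vertices γ₂, q = ((0 : ℤ), (0 : ℤ))) ↔
      ∀ i, 0 < i → i ≤ γ₁.length → (γ₁.take i).count .E ≠ (γ₂.take i).count .E := by
  constructor
  · intro H i hi hin heq
    have hpt : endpoint (γ₂.take i) = endpoint (γ₁.take i) := by
      have h₁ := Step.count_E_add_count_N (γ₁.take i)
      have h₂ := Step.count_E_add_count_N (γ₂.take i)
      simp only [length_take] at h₁ h₂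
      simp only [endpoint, heq, Prod.mk.injEq, true_and]
      omega
    have h₀ := H _ ⟨⟨i, hin, rfl⟩, ⟨i, hl ▸ hin, hpt⟩⟩
    have := endpoint_fst_add_snd (γ₁.take i)
    rw [h₀] at this
    simp only [add_zero, length_take] at this
    omega
  · rintro H q ⟨⟨i, hi, rfl⟩, ⟨j, hj, hij⟩⟩
    obtain rfl : j = i := by
      have := congrArg (fun q : ℤ × ℤ => q.1 + q.2) hij
      simp only [endpoint_fst_add_snd, length_take] at this
      omega
    rcases Nat.eq_zero_or_pos j with rfl | hj₀
    · simp [endpoint]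
    · exact absurd (by simpa [endpoint] using congrArg Prod.fst hij.symm) (H j hj₀ hi)

def StaysLeftOf (g : ℤ) (v u : List Step) : Prop :=
  ∀ i, ((v.take i).count Step.E : ℤ) ≤ g + (u.take i).count Step.E

theorem staysLeftOf_nil {g : ℤ} : StaysLeftOf g [] [] ↔ 0 ≤ g := by
  simp [StaysLeftOf]

theorem staysLeftOf_cons {g : ℤ} {t b : Step} {v u : List Step} :
    StaysLeftOf g (t :: v) (b :: u) ↔
      0 ≤ g ∧ StaysLeftOf (g + [b].count .E - [t].count .E) v u := by
  refine ⟨fun H => ⟨by simpa using H 0, fun i => ?_⟩, fun ⟨hg, H⟩ i => ?_⟩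
  · have := H (i + 1)
    rw [take_succ_cons, take_succ_cons, ← singleton_append, count_append,
      ← singleton_append (x := b), count_append] at this
    omega
  · cases i with
    | zero => simpa using hg
    | succ i =>
      have := H i
      rw [take_succ_cons, take_succ_cons, ← singleton_append, count_append,
        ← singleton_append (x := b), count_append]
      omega

theorem forall_mem_vertices_inter_cons_iff_staysLeftOf {v u : List Step} (hl : v.length = u.length)
    (hc : v.count .E = u.count .E) :
    (∀ q ∈ vertices (.N :: v) ∩ vertices (.E :: u), q = ((0 : ℤ), (0 : ℤ))) ↔
      StaysLeftOf 0 v u := by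
  rw [forall_mem_vertices_inter_eq_zero_iff (by simpa using hl)]
  constructor
  · intro H
    have hne : ∀ i, (v.take i).count .E ≠ (u.take i).count .E + 1 := by
      intro i
      rcases le_or_gt i v.length with hi | hi
      · simpa using H (i + 1) i.succ_pos (by simpa using hi)
      · rw [take_of_length_le hi.le, take_of_length_le (hl ▸ hi.le), hc]
        omega
    intro i
    have := count_take_le_of_forall_ne_add_one hne i
    omega
  · rintro H (_ | i) hi -
    · omega
    · have := H i
      rw [take_succ_cons, take_succ_cons, count_cons_of_ne (by decide), count_cons_self]
      omega

def weakPairs (m : ℕ) : Set (List Step × List Step) :=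
  {p | p.1.length = m ∧ p.2.length = m ∧ StaysLeftOf 0 p.1 p.2 ∧ p.1.count .E = p.2.count .E}

theorem pathPairs_two_eq_image (m : ℕ) :
    PathPairs 2 (m + 1) 0 1 = Prod.map (cons .N) (cons .E) '' weakPairs m := by
  ext ⟨γ₁, γ₂⟩
  constructor
  · rintro ⟨hl₁, hh₁, hl₂, hh₂, hcross, hdist, -⟩
    obtain ⟨v, rfl⟩ := head?_eq_some_iff.1 hh₁
    obtain ⟨u, rfl⟩ := head?_eq_some_iff.1 hh₂
    simp only [length_cons] at hl₁ hl₂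
    have hc : v.count .E = u.count .E := by
      dsimp only [endpoint] at hdist
      rw [count_cons_self, count_cons_of_ne (by decide)] at hdist
      omega
    refine ⟨(v, u), ⟨(by omega : v.length = m), (by omega : u.length = m), ?_, hc⟩, rfl⟩
    exact (forall_mem_vertices_inter_cons_iff_staysLeftOf (by omega) hc).1 hcross
  · rintro ⟨⟨v, u⟩, ⟨hv, hu, hs, hc⟩, heq⟩
    simp only [Prod.map, Prod.mk.injEq] at heq
    obtain ⟨rfl, rfl⟩ := heq
    dsimp only at hv hu hs hc
    refine ⟨by simp [hv], rfl, by simp [hu], rfl, (forall_mem_vertices_inter_cons_iff_staysLeftOf (by omega) hc).2 hs, ?_,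
      kGoodBottom_two_cons_E u⟩
    simp [endpoint, hc]

def Ballot (h : ℤ) (w : List DyckStep) : Prop :=
  ∀ i, ((w.take i).count D : ℤ) ≤ h + (w.take i).count U

theorem ballot_nil {h : ℤ} : Ballot h [] ↔ 0 ≤ h := by
  simp [Ballot]

theorem ballot_cons {h : ℤ} {a : DyckStep} {w : List DyckStep} :
    Ballot h (a :: w) ↔ 0 ≤ h ∧ Ballot (h + [a].count U - [a].count D) w := by
  refine ⟨fun H => ⟨by simpa using H 0, fun i => ?_⟩, fun ⟨hh, H⟩ i => ?_⟩
  · have := H (i + 1)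
    rw [take_succ_cons, ← singleton_append, count_append, count_append] at this
    omega
  · cases i with
    | zero => simpa using hh
    | succ i =>
      have := H i
      rw [take_succ_cons, ← singleton_append, count_append, count_append]
      omega

theorem ballot_append {h : ℤ} {w₁ w₂ : List DyckStep} :
    Ballot h (w₁ ++ w₂) ↔ Ballot h w₁ ∧ Ballot (h + w₁.count U - w₁.count D) w₂ := by
  induction w₁ generalizing h with
  | nil => simpa [ballot_nil] using fun H => by simpa using H 0
  | cons a w₁ ih =>
    have hheight : h + [a].count U - [a].count D + w₁.count U - w₁.count D =
        h + (a :: w₁).count U - (a :: w₁).count D := by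
      rw [← singleton_append (l := w₁), count_append, count_append]
      push_cast
      ring
    rw [cons_append, ballot_cons, ballot_cons, ih, hheight, and_assoc]

theorem ballot_zero_iff {w : List DyckStep} :
    Ballot 0 w ↔ ∀ i, (w.take i).count D ≤ (w.take i).count U := by
  simp [Ballot]

theorem ballot_zero_nest_iff {w : List DyckStep} (hw : w.count U = w.count D) :
    Ballot 0 (U :: w ++ [D]) ↔ Ballot 1 w := by
  simp [ballot_append, ballot_cons, ballot_nil, hw]

namespace Step

def topLetter : Step ≃ DyckStep where
  toFun | N => U | E => D
  invFun | U => N | D => E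
  left_inv s := by cases s <;> rfl
  right_inv s := by cases s <;> rfl

def bottomLetter : Step ≃ DyckStep where
  toFun | E => U | N => D
  invFun | U => E | D => N
  left_inv s := by cases s <;> rfl
  right_inv s := by cases s <;> rfl

end Step

def weave (v u : List Step) : List DyckStep :=
  interleave (v.map Step.topLetter) (u.map Step.bottomLetter)

theorem count_U_weave (v u : List Step) : (weave v u).count U = v.count .N + u.count .E := by
  rw [weave, count_interleave, show U = Step.topLetter .N from rfl,
    count_map_of_injective _ _ Step.topLetter.injective,
    show Step.topLetter .N = Step.bottomLetter .E from rfl,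
    count_map_of_injective _ _ Step.bottomLetter.injective]

theorem count_D_weave (v u : List Step) : (weave v u).count D = v.count .E + u.count .N := by
  rw [weave, count_interleave, show D = Step.topLetter .E from rfl,
    count_map_of_injective _ _ Step.topLetter.injective,
    show Step.topLetter .E = Step.bottomLetter .N from rfl,
    count_map_of_injective _ _ Step.bottomLetter.injective]

theorem ballot_weave_iff {v u : List Step} (hl : v.length = u.length) {g : ℤ} :
    Ballot (2 * g + 1) (weave v u) ↔ StaysLeftOf g v u := by
  induction v generalizing u g with
  | nil =>
    rw [eq_nil_of_length_eq_zero hl.symm]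
    simp only [weave, map_nil, interleave_nil, ballot_nil, staysLeftOf_nil]
    omega
  | cons t v ih =>
    obtain ⟨b, u, rfl⟩ := exists_cons_of_length_eq_add_one hl.symm
    have hheight : 2 * g + 1 + [t.topLetter].count U - [t.topLetter].count D +
        [b.bottomLetter].count U - [b.bottomLetter].count D =
        2 * (g + [b].count .E - [t].count .E) + 1 := by
      cases t <;> cases b <;> simp [Step.topLetter, Step.bottomLetter] <;> ring
    -- The height before each pair of letters is odd, so the first letter of a pair cannot make it
    -- negative.
    have hfirst : (0 ≤ 2 * g + 1 ∧ 0 ≤ 2 * g + 1 + [t.topLetter].count U - [t.topLetter].count D) ↔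
        0 ≤ g := by
      cases t <;> simp [Step.topLetter] <;> omega
    simp only [weave, map_cons, cons_interleave, ballot_cons, staysLeftOf_cons]
    rw [hheight, ← weave, ih (by simpa using hl), ← and_assoc, hfirst]

def dyckOfPair (p : List Step × List Step) : List DyckStep := U :: weave p.1 p.2 ++ [D]

theorem isDyck_dyckOfPair_iff {v u : List Step} (hl : v.length = u.length) :
    ((∀ i, ((dyckOfPair (v, u)).take i).count D ≤ ((dyckOfPair (v, u)).take i).count U) ∧
      (dyckOfPair (v, u)).count U = (dyckOfPair (v, u)).count D) ↔
    StaysLeftOf 0 v u ∧ v.count .E = u.count .E := by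
  have hcount : (weave v u).count U = (weave v u).count D ↔ v.count .E = u.count .E := by
    have := Step.count_E_add_count_N v
    have := Step.count_E_add_count_N u
    rw [count_U_weave, count_D_weave]
    omega
  have hnest : (dyckOfPair (v, u)).count U = (dyckOfPair (v, u)).count D ↔
      (weave v u).count U = (weave v u).count D := by
    simp [dyckOfPair]
  rw [← ballot_zero_iff, hnest, hcount]
  refine and_congr_left fun hc => ?_
  rw [dyckOfPair, ballot_zero_nest_iff (hcount.2 hc)]
  simpa using ballot_weave_iff hl (g := 0)

theorem injOn_dyckOfPair (m : ℕ) : Set.InjOn dyckOfPair (weakPairs m) := by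
  rintro ⟨v, u⟩ ⟨hv, hu, -⟩ ⟨v', u'⟩ ⟨hv', hu', -⟩ h
  simp only [dyckOfPair, weave, cons_append, cons.injEq, append_cancel_right_eq, true_and] at h
  obtain ⟨hv, hu⟩ := interleave_inj (by simp_all) (by simp_all) h
  simp only [Prod.mk.injEq]
  exact ⟨map_injective_iff.2 Step.topLetter.injective hv,
    map_injective_iff.2 Step.bottomLetter.injective hu⟩

theorem image_toList_setOf_semilength_eq (m : ℕ) :
    DyckWord.toList '' {p | p.semilength = m + 1} = dyckOfPair '' weakPairs m := by
  ext w
  constructor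
  · rintro ⟨p, hp, rfl⟩
    have hp0 : p ≠ 0 := by rintro rfl; simp at hp
    have hlen : (p.toList.dropLast.tail).length = 2 * m := by
      have := p.two_mul_semilength_eq_length
      simp only [Set.mem_ofPred_eq] at hp
      simp only [length_tail, length_dropLast]
      omega
    obtain ⟨v', u', hv', hu', hvu⟩ := exists_eq_interleave_of_length_eq_two_mul hlen
    set v := v'.map Step.topLetter.symm
    set u := u'.map Step.bottomLetter.symm
    have hw : dyckOfPair (v, u) = p.toList := by
      rw [← DyckWord.cons_tail_dropLast_concat hp0, hvu]
      simp [dyckOfPair, weave, v, u]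
    have hl : v.length = u.length := by simp [v, u, hv', hu']
    obtain ⟨hs, hc⟩ :=
      (isDyck_dyckOfPair_iff hl).1 (hw ▸ ⟨p.count_D_le_count_U, p.count_U_eq_count_D⟩)
    exact ⟨(v, u), ⟨by simpa [v] using hv', by simpa [u] using hu', hs, hc⟩, hw⟩
  · rintro ⟨⟨v, u⟩, ⟨hv, hu, hs, hc⟩, rfl⟩
    dsimp only at hv hu hs hc
    have hd := (isDyck_dyckOfPair_iff (hv.trans hu.symm)).2 ⟨hs, hc⟩
    refine ⟨⟨dyckOfPair (v, u), hd.2, hd.1⟩, ?_, rfl⟩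
    have := Step.count_E_add_count_N v
    show (dyckOfPair (v, u)).count U = m + 1
    rw [dyckOfPair, cons_append, count_cons_self, count_append, count_U_weave,
      count_cons_of_ne (by decide), count_nil]
    dsimp only
    omega

theorem DyckWord.ncard_setOf_semilength_eq (n : ℕ) :
    {p : DyckWord | p.semilength = n}.ncard = catalan n := by
  rw [← Nat.card_coe_set_eq, ← DyckWord.card_dyckWord_semilength_eq_catalan,
    ← Nat.card_eq_fintype_card]
  rfl

theorem catalan_eq_one_div_mul_choose (n : ℕ) :
    (catalan n : ℚ) = 1 / ((n : ℚ) + 1) * ((2 * n).choose n : ℚ) := by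
  rw [← Nat.centralBinom_eq_two_mul_choose, ← succ_mul_catalan_eq_centralBinom]
  push_cast
  field_simp

/-- The number of path pairs of length `n` and distance `1` is the `n`-th
Catalan number `C_n = (1/(n+1)) C(2n, n)`. -/
theorem pathPair_catalan (n : ℕ) (hn : 1 ≤ n) :
    (PathPairs 2 n 0 1).ncard = catalan n ∧
    ((PathPairs 2 n 0 1).ncard : ℚ) = 1 / ((n : ℚ) + 1) * ((2 * n).choose n : ℚ) := by
  obtain ⟨m, rfl⟩ := Nat.exists_eq_add_of_le' hn
  have hcard : (PathPairs 2 (m + 1) 0 1).ncard = catalan (m + 1) := by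
    rw [pathPairs_two_eq_image,
      Set.ncard_image_of_injective _ (Prod.map_injective.2 ⟨cons_injective, cons_injective⟩),
      ← (injOn_dyckOfPair m).ncard_image, ← image_toList_setOf_semilength_eq,
      Set.ncard_image_of_injective _ fun _ _ => DyckWord.ext, DyckWord.ncard_setOf_semilength_eq]
  exact ⟨hcard, by rw [hcard, catalan_eq_one_div_mul_choose]⟩
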